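/- Let A be an algebra in a congruence modular variety with (C1), and suppose ζ is the center of A. If ξ ≥ ζ is a congruence on A such that ξ/ζ is central in Con(A/ζ), then ξ = ζ; in other words, A/ζ_A is centerless. -/

import Mathlib

/-- An algebraic signature: a type of operation symbols with finite arities. -/
structure Signature where
  ops : Type
  arity : ops → ℕ

/-- An algebra for a signature. -/
structure SAlgebra (S : Signature) where
  carrier : Type
  interp : (o : S.ops) → (Fin (S.arity o) → carrier) → carrier

namespace SAlgebra

variable {S : Signature}

/-- Binary product of algebras. -/
def prod (A B : SAlgebra S) : SAlgebra S where
  carrier := A.carrier × B.carrier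
  interp o x := (A.interp o fun i => (x i).1, B.interp o fun i => (x i).2)

/-- Product of a family of algebras. -/
def pi {ι : Type} (A : ι → SAlgebra S) : SAlgebra S where
  carrier := ∀ i, (A i).carrier
  interp o x i := (A i).interp o fun j => x j i

end SAlgebra

/-- Homomorphisms of algebras. -/
structure SHom {S : Signature} (A B : SAlgebra S) where
  toFun : A.carrier → B.carrier
  map : ∀ (o : S.ops) (x : Fin (S.arity o) → A.carrier),
    toFun (A.interp o x) = B.interp o fun i => toFun (x i)

namespace SHom

variable {S : Signature}

/-- Composition of homomorphisms. -/
def comp {A B C : SAlgebra S} (g : SHom B C) (f : SHom A B) : SHom A C where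
  toFun := g.toFun ∘ f.toFun
  map o x := by simp [Function.comp, f.map, g.map]

/-- The `i`-th projection of a product. -/
def proj {ι : Type} (A : ι → SAlgebra S) (i : ι) : SHom (SAlgebra.pi A) (A i) where
  toFun x := x i
  map _ _ := rfl

end SHom

/-- Congruences of an algebra. -/
structure SCon {S : Signature} (A : SAlgebra S) where
  r : A.carrier → A.carrier → Prop
  iseqv : Equivalence r
  compat : ∀ (o : S.ops) (x y : Fin (S.arity o) → A.carrier),
    (∀ i, r (x i) (y i)) → r (A.interp o x) (A.interp o y)

namespace SCon

variable {S : Signature} {A : SAlgebra S}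

instance : PartialOrder (SCon A) where
  le c d := ∀ x y, c.r x y → d.r x y
  le_refl _ _ _ h := h
  le_trans _ _ _ h h' x y hx := h' x y (h x y hx)
  le_antisymm a b h h' := by
    cases a; cases b
    have : ∀ x y : A.carrier, _ ↔ _ := fun x y => Iff.intro (h x y) (h' x y)
    simp only [SCon.mk.injEq]
    funext x y
    exact propext (this x y)

instance : InfSet (SCon A) :=
  ⟨fun s =>
    { r := fun x y => ∀ c ∈ s, c.r x y
      iseqv := ⟨fun x c _ => c.iseqv.refl x, fun h c hc => c.iseqv.symm (h c hc),
        fun h1 h2 c hc => c.iseqv.trans (h1 c hc) (h2 c hc)⟩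
      compat := fun o x y h c hc => c.compat o x y fun i => h i c hc }⟩

instance : CompleteLattice (SCon A) :=
  completeLatticeOfInf _ (fun s =>
    ⟨fun c hc x y h => h c hc, fun b hb x y h c hc => hb hc x y h⟩)

/-- Restriction (inverse image) of a congruence along a homomorphism. -/
def comap {B : SAlgebra S} (f : SHom A B) (θ : SCon B) : SCon A where
  r x y := θ.r (f.toFun x) (f.toFun y)
  iseqv := ⟨fun _ => θ.iseqv.refl _, θ.iseqv.symm, θ.iseqv.trans⟩
  compat o x y h := by
    show θ.r (f.toFun (A.interp o x)) (f.toFun (A.interp o y))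
    rw [f.map, f.map]
    exact θ.compat o _ _ h

/-- Product of two congruences. -/
def prodCon {A B : SAlgebra S} (φ : SCon A) (ψ : SCon B) : SCon (A.prod B) where
  r x y := φ.r x.1 y.1 ∧ ψ.r x.2 y.2
  iseqv := ⟨fun _ => ⟨φ.iseqv.refl _, ψ.iseqv.refl _⟩,
    fun h => ⟨φ.iseqv.symm h.1, ψ.iseqv.symm h.2⟩,
    fun h h' => ⟨φ.iseqv.trans h.1 h'.1, ψ.iseqv.trans h.2 h'.2⟩⟩
  compat o x y h := ⟨φ.compat o _ _ fun i => (h i).1, ψ.compat o _ _ fun i => (h i).2⟩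

/-- Product of a family of congruences. -/
def piCon {ι : Type} {A : ι → SAlgebra S} (φ : ∀ i, SCon (A i)) : SCon (SAlgebra.pi A) where
  r x y := ∀ i, (φ i).r (x i) (y i)
  iseqv := ⟨fun _ i => (φ i).iseqv.refl _, fun h i => (φ i).iseqv.symm (h i),
    fun h h' i => (φ i).iseqv.trans (h i) (h' i)⟩
  compat o x y h i := (φ i).compat o _ _ fun j => h j i

end SCon

/-- Terms in `n` variables over a signature. -/
inductive STerm (S : Signature) : ℕ → Type where
  | var : {n : ℕ} → Fin n → STerm S n
  | app : {n : ℕ} → (o : S.ops) → (Fin (S.arity o) → STerm S n) → STerm S n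

/-- Evaluation of a term in an algebra. -/
def STerm.eval {S : Signature} (A : SAlgebra S) {n : ℕ} : STerm S n → (Fin n → A.carrier) → A.carrier
  | .var i, x => x i
  | .app o t, x => A.interp o fun j => (t j).eval A x

/-- The term-condition centralizer relation `C(α, β; δ)`. -/
def Centralizes {S : Signature} (A : SAlgebra S) (α β δ : SCon A) : Prop :=
  ∀ (n m : ℕ) (t : STerm S (n + m)) (a b : Fin n → A.carrier) (u v : Fin m → A.carrier),
    (∀ i, α.r (a i) (b i)) → (∀ j, β.r (u j) (v j)) →
    δ.r (t.eval A (Fin.append a u)) (t.eval A (Fin.append a v)) →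
    δ.r (t.eval A (Fin.append b u)) (t.eval A (Fin.append b v))

/-- The commutator `[α, β]`: the least congruence `δ` with `C(α, β; δ)`. -/
def conCommutator {S : Signature} (A : SAlgebra S) (α β : SCon A) : SCon A :=
  sInf {δ | Centralizes A α β δ}

/-- The center of an algebra: the largest central congruence. -/
def conCenter {S : Signature} (A : SAlgebra S) : SCon A :=
  sSup {θ | conCommutator A θ ⊤ = ⊥}

/-- A class of algebras is a variety iff it is closed under subalgebras
(isomorphic copies included), homomorphic images and products. -/
def IsVariety {S : Signature} (V : SAlgebra S → Prop) : Prop :=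
  (∀ (A B : SAlgebra S) (e : SHom A B), Function.Injective e.toFun → V B → V A) ∧
  (∀ (A B : SAlgebra S) (p : SHom A B), Function.Surjective p.toFun → V A → V B) ∧
  (∀ (ι : Type) (A : ι → SAlgebra S), (∀ i, V (A i)) → V (SAlgebra.pi A))

/-- A congruence modular variety. -/
def IsCongruenceModularVariety {S : Signature} (V : SAlgebra S → Prop) : Prop :=
  IsVariety V ∧ ∀ A : SAlgebra S, V A → IsModularLattice (SCon A)

/-- A Gumm difference term for the class `V`:  `d(x,y,y) = x` holds identically,
and `d(x,x,y) = y` whenever `x θ y` for an abelian congruence `θ`. -/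
def IsGummDifferenceTerm {S : Signature} (V : SAlgebra S → Prop) (d : STerm S 3) : Prop :=
  (∀ A : SAlgebra S, V A → ∀ x y : A.carrier, d.eval A ![x, y, y] = x) ∧
  (∀ A : SAlgebra S, V A → ∀ θ : SCon A, conCommutator A θ θ = ⊥ →
    ∀ x y : A.carrier, θ.r x y → d.eval A ![x, x, y] = y)

/-- `R` is an absolute retract in `V`: every embedding of `R` into a member of `V`
admits a retraction. -/
def IsAbsoluteRetract {S : Signature} (V : SAlgebra S → Prop) (R : SAlgebra S) : Prop :=
  ∀ A : SAlgebra S, V A → ∀ e : SHom R A, Function.Injective e.toFun →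
    ∃ p : SHom A R, ∀ x, p.toFun (e.toFun x) = x

/-- An embedding is essential iff every congruence of the codomain restricting
trivially is trivial. -/
def IsEssential {S : Signature} {A B : SAlgebra S} (e : SHom A B) : Prop :=
  ∀ θ : SCon B, SCon.comap e θ = ⊥ → θ = ⊥

/-- A congruence `α` is dense: any congruence meeting it trivially is trivial. -/
def DenseCon {S : Signature} {A : SAlgebra S} (α : SCon A) : Prop :=
  ∀ θ : SCon A, θ ⊓ α = ⊥ → θ = ⊥

/-- The setoid underlying a congruence. -/
def SCon.setoid {S : Signature} {A : SAlgebra S} (θ : SCon A) : Setoid A.carrier :=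
  ⟨θ.r, θ.iseqv⟩

/-- Quotient algebra. -/
noncomputable def SAlgebra.quot {S : Signature} (A : SAlgebra S) (θ : SCon A) : SAlgebra S where
  carrier := Quotient θ.setoid
  interp o x := Quotient.mk θ.setoid (A.interp o fun i => (x i).out)

theorem SCon.out_rel {S : Signature} {A : SAlgebra S} (θ : SCon A) (a : A.carrier) :
    θ.r (Quotient.out (Quotient.mk θ.setoid a)) a :=
  @Quotient.exact _ θ.setoid _ _ (Quotient.out_eq _)

/-- The canonical quotient homomorphism. -/
def SHom.quotHom {S : Signature} (A : SAlgebra S) (θ : SCon A) : SHom A (A.quot θ) where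
  toFun := Quotient.mk θ.setoid
  map o x := Quotient.sound (θ.compat o _ _ fun i => θ.iseqv.symm (θ.out_rel (x i)))

/-- Product map of a family of homomorphisms. -/
def SHom.piMap {S : Signature} {ι : Type} {A B : ι → SAlgebra S} (f : ∀ i, SHom (A i) (B i)) :
    SHom (SAlgebra.pi A) (SAlgebra.pi B) where
  toFun x i := (f i).toFun (x i)
  map o x := funext fun i => (f i).map o fun j => x j i

/-- The congruence `φ/θ` on the quotient `A/θ`, for `θ ≤ φ`. -/
def SCon.quotCon {S : Signature} {A : SAlgebra S} (θ φ : SCon A) (h : θ ≤ φ) :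
    SCon (A.quot θ) where
  r a b := φ.r a.out b.out
  iseqv := ⟨fun _ => φ.iseqv.refl _, φ.iseqv.symm, φ.iseqv.trans⟩
  compat o x y hxy := by
    have hx := h _ _ (θ.out_rel (A.interp o fun i => (x i).out))
    have hy := h _ _ (θ.out_rel (A.interp o fun i => (y i).out))
    exact φ.iseqv.trans hx (φ.iseqv.trans (φ.compat o _ _ hxy) (φ.iseqv.symm hy))

/-- Finitely subdirectly irreducible: `⊥` is meet irreducible in the congruence lattice. -/
def IsFSI {S : Signature} (A : SAlgebra S) : Prop :=
  ∀ θ φ : SCon A, θ ⊓ φ = ⊥ → θ = ⊥ ∨ φ = ⊥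

/-- Subdirectly irreducible: the congruence lattice has a monolith. -/
def IsSubdirectlyIrreducible {S : Signature} (A : SAlgebra S) : Prop :=
  ∃ μ : SCon A, μ ≠ ⊥ ∧ ∀ θ : SCon A, θ ≠ ⊥ → μ ≤ θ

/-!
(C1) with `β = 1` gives `[α, 1] = α ∧ [1, 1]` for every `α`. Pulling the hypothesis on `ξ/ζ`
back along `A → A/ζ` gives `[ξ, 1] ≤ ζ`, hence `[ξ, 1] ≤ ζ ∧ [1, 1] = [ζ, 1] = 0`, and `ξ ≤ ζ` by
maximality of the center. That the center is itself central holds because the term condition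
`C(-, β; δ)` passes to joins: a join of congruences is reached by chains of steps inside its
members, and the tuples in the term condition can be moved along such chains one coordinate at a
time.
-/

open Relation in
theorem reflTransGen_pi_induction {X : Type*} {R : X → X → Prop} {n : ℕ}
    {P : (Fin n → X) → Prop}
    (step : ∀ (c : Fin n → X) (i : Fin n) (x y : X), R x y →
      P (Function.update c i x) → P (Function.update c i y))
    {a b : Fin n → X} (hab : ∀ i, ReflTransGen R (a i) (b i)) (ha : P a) : P b := by
  induction n with
  | zero => exact Subsingleton.elim a b ▸ ha
  | succ n ih =>
    rw [← Fin.cons_self_tail a] at ha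
    rw [← Fin.cons_self_tail b]
    have head : ∀ y, ReflTransGen R (a 0) y → P (Fin.cons y (Fin.tail a)) := by
      intro y hy
      induction hy with
      | refl => exact ha
      | tail _ hxy ih0 =>
        have := step (Fin.cons (a 0) (Fin.tail a)) 0 _ _ hxy (by rwa [Fin.update_cons_zero])
        rwa [Fin.update_cons_zero] at this
    refine ih (P := fun c => P (Fin.cons (b 0) c)) (fun c i x y hxy h => ?_)
      (fun i => hab i.succ) (head _ (hab 0))
    have := step (Fin.cons (b 0) c) i.succ x y hxy (by rwa [← Fin.cons_update])
    rwa [← Fin.cons_update] at this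

theorem Fin.comp_append {X Y : Type*} {n m : ℕ} (f : X → Y) (a : Fin n → X) (u : Fin m → X) :
    f ∘ Fin.append a u = Fin.append (f ∘ a) (f ∘ u) := by
  funext i
  refine Fin.addCases (fun i => ?_) (fun j => ?_) i <;> simp

section

variable {S : Signature} {A B : SAlgebra S}

theorem STerm.eval_comp (f : SHom A B) {n : ℕ} (t : STerm S n) (x : Fin n → A.carrier) :
    t.eval B (f.toFun ∘ x) = f.toFun (t.eval A x) := by
  induction t with
  | var i => rfl
  | app o ts ih =>
    simp only [STerm.eval, f.map]
    exact congrArg _ (funext fun j => ih j)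

namespace SCon

theorem bot_r_iff {x y : A.carrier} : (⊥ : SCon A).r x y ↔ x = y :=
  ⟨fun h => h ⟨Eq, eq_equivalence, fun _ _ _ hxy => congrArg _ (funext hxy)⟩ trivial,
    fun h => h ▸ (⊥ : SCon A).iseqv.refl x⟩

theorem top_r (x y : A.carrier) : (⊤ : SCon A).r x y :=
  fun _ h => h.elim

theorem le_comap_top (f : SHom A B) : (⊤ : SCon A) ≤ comap f ⊤ :=
  fun _ _ _ => top_r _ _

theorem comap_quotHom_bot (θ : SCon A) : comap (SHom.quotHom A θ) ⊥ = θ :=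
  le_antisymm (fun _ _ h => Quotient.exact (s := θ.setoid) (bot_r_iff.mp h))
    (fun _ _ h => bot_r_iff.mpr (Quotient.sound (s := θ.setoid) h))

theorem le_comap_quotHom_quotCon {θ φ : SCon A} (hle : θ ≤ φ) :
    φ ≤ comap (SHom.quotHom A θ) (quotCon θ φ hle) := fun x y h =>
  φ.iseqv.trans (hle _ _ (θ.out_rel x)) (φ.iseqv.trans h (φ.iseqv.symm (hle _ _ (θ.out_rel y))))

theorem r_update {θ : SCon A} {n : ℕ} (c : Fin n → A.carrier) (i : Fin n) {x y : A.carrier}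
    (h : θ.r x y) (j : Fin n) : θ.r (Function.update c i x j) (Function.update c i y j) := by
  rcases eq_or_ne j i with rfl | hji
  · simpa using h
  · simpa [hji] using θ.iseqv.refl (c j)

def chainCon (s : Set (SCon A)) : SCon A where
  r := Relation.ReflTransGen fun x y => ∃ θ ∈ s, θ.r x y
  iseqv := ⟨fun _ => .refl,
    fun h => Relation.ReflTransGen.mono (fun _ _ ⟨θ, hθ, hr⟩ => ⟨θ, hθ, θ.iseqv.symm hr⟩) _ _
      (Relation.ReflTransGen.swap _ _ h),
    .trans⟩
  compat o x _ hxy := reflTransGen_pi_induction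
    (P := fun c => Relation.ReflTransGen _ (A.interp o x) (A.interp o c))
    (fun c i _ _ ⟨θ, hθ, hr⟩ h => h.tail ⟨θ, hθ, θ.compat o _ _ (r_update c i hr)⟩) hxy .refl

theorem reflTransGen_of_sSup_r {s : Set (SCon A)} {x y : A.carrier} (h : (sSup s).r x y) :
    Relation.ReflTransGen (fun x y => ∃ θ ∈ s, θ.r x y) x y :=
  (sSup_le fun θ hθ _ _ h => .single ⟨θ, hθ, h⟩ : sSup s ≤ chainCon s) x y h

end SCon

theorem Centralizes.mono {α α' β β' δ : SCon A} (h : Centralizes A α β δ) (hα : α' ≤ α)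
    (hβ : β' ≤ β) : Centralizes A α' β' δ :=
  fun n m t a b u v ha hu => h n m t a b u v (fun i => hα _ _ (ha i)) (fun j => hβ _ _ (hu j))

theorem Centralizes.comap (f : SHom A B) {α β δ : SCon B} (h : Centralizes B α β δ) :
    Centralizes A (SCon.comap f α) (SCon.comap f β) (SCon.comap f δ) := by
  intro n m t a b u v ha hu hδ
  simp only [SCon.comap, ← STerm.eval_comp f, Fin.comp_append] at hδ ⊢
  exact h n m t _ _ _ _ ha hu hδ

theorem Centralizes.sSup {s : Set (SCon A)} {β δ : SCon A}
    (h : ∀ θ ∈ s, Centralizes A θ β δ) : Centralizes A (sSup s) β δ := by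
  intro n m t a b u v ha hu hδ
  exact reflTransGen_pi_induction
    (P := fun c => δ.r (t.eval A (Fin.append c u)) (t.eval A (Fin.append c v)))
    (fun c i _ _ ⟨θ, hθ, hr⟩ => h θ hθ n m t _ _ u v (SCon.r_update c i hr) hu)
    (fun i => SCon.reflTransGen_of_sSup_r (ha i)) hδ

theorem centralizes_conCommutator (α β : SCon A) : Centralizes A α β (conCommutator A α β) :=
  fun n m t a b u v ha hu hδ _ hδ' => hδ' n m t a b u v ha hu (hδ _ hδ')

theorem conCommutator_le {α β δ : SCon A} (h : Centralizes A α β δ) : conCommutator A α β ≤ δ :=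
  sInf_le h

theorem conCommutator_eq_bot_iff {α β : SCon A} :
    conCommutator A α β = ⊥ ↔ Centralizes A α β ⊥ :=
  ⟨fun h => h ▸ centralizes_conCommutator α β, fun h => le_bot_iff.mp (conCommutator_le h)⟩

theorem conCommutator_conCenter_top (A : SAlgebra S) : conCommutator A (conCenter A) ⊤ = ⊥ :=
  conCommutator_eq_bot_iff.mpr <| Centralizes.sSup fun _ hθ => conCommutator_eq_bot_iff.mp hθ

theorem conCommutator_top_le_of_quotCon {θ φ : SCon A} (hle : θ ≤ φ)
    (h : conCommutator (A.quot θ) (SCon.quotCon θ φ hle) ⊤ = ⊥) : conCommutator A φ ⊤ ≤ θ := by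
  refine conCommutator_le ?_
  have := (conCommutator_eq_bot_iff.mp h).comap (SHom.quotHom A θ)
  rw [SCon.comap_quotHom_bot] at this
  exact this.mono (SCon.le_comap_quotHom_quotCon hle) (SCon.le_comap_top _)

end

theorem quotient_by_center_centerless_general {S : Signature}
    (V : SAlgebra S → Prop)
    (hC1 : ∀ B : SAlgebra S, V B → ∀ α β : SCon B,
      α ⊓ conCommutator B β β = conCommutator B (α ⊓ β) β)
    (A : SAlgebra S) (hA : V A)
    (ξ : SCon A) (hle : conCenter A ≤ ξ)
    (hcentral : conCommutator (A.quot (conCenter A)) (SCon.quotCon (conCenter A) ξ hle) ⊤ = ⊥) :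
    ξ = conCenter A := by
  have hC1_top : ∀ α : SCon A, conCommutator A α ⊤ = α ⊓ conCommutator A ⊤ ⊤ := fun α => by
    simpa only [inf_top_eq] using (hC1 A hA α ⊤).symm
  refine le_antisymm (le_sSup (le_bot_iff.mp ?_)) hle
  calc conCommutator A ξ ⊤
      ≤ conCenter A ⊓ conCommutator A ⊤ ⊤ :=
        le_inf (conCommutator_top_le_of_quotCon hle hcentral) (hC1_top ξ ▸ inf_le_right)
    _ = conCommutator A (conCenter A) ⊤ := (hC1_top _).symm
    _ = ⊥ := conCommutator_conCenter_top A

/-- In a congruence modular variety satisfying (C1): if `ξ ≥ ζ_A` and `ξ/ζ_A` is central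
in `Con(A/ζ_A)`, then `ξ = ζ_A`; that is, `A/ζ_A` is centerless. -/
theorem quotient_by_center_centerless {S : Signature}
    (V : SAlgebra S → Prop) (hV : IsCongruenceModularVariety V)
    (hC1 : ∀ B : SAlgebra S, V B → ∀ α β : SCon B,
      α ⊓ conCommutator B β β = conCommutator B (α ⊓ β) β)
    (A : SAlgebra S) (hA : V A)
    (ξ : SCon A) (hle : conCenter A ≤ ξ)
    (hcentral : conCommutator (A.quot (conCenter A)) (SCon.quotCon (conCenter A) ξ hle) ⊤ = ⊥) :
    ξ = conCenter A :=
  quotient_by_center_centerless_general V hC1 A hA ξ hle hcentral
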